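/- Let A be a bounded self-adjoint operator on a complex Hilbert space H, h ∈ H, and μ(R) = ⟨E(R)h, h⟩. If x ∈ ℝ is such that the symmetric derivative μ'(x) = lim_{h→0} μ((x, x+h])/h exists and is strictly positive, then ‖(A - x - iε)⁻¹ h‖ → ∞ as ε → 0⁺. -/

import Mathlib

/-!
Put `z = x + iε`, `u = (A - z)⁻¹ h` and `S = (x, x + ε]`. Since `E S` commutes with `A`,
`E S h = (A - z) (E S u)`, and `E S u` is spectrally supported in `S`, where
`|t - z|² ≤ 2ε²`. The first two moments of the scalar measure `μ_v` of a vector give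
`‖(A - z) v‖² = ∫ |t - z|² dμ_v`, hence `μ(S) = ‖E S h‖² ≤ 2ε² ‖E S u‖² ≤ 2ε² ‖u‖²`,
i.e. `‖u‖² ≥ μ(S) / (2ε²) ≈ L / (2ε) → ∞`.
-/

open scoped InnerProductSpace
open MeasureTheory Filter Topology

/-- A projection-valued spectral measure for the bounded self-adjoint operator `A` on a complex
Hilbert space: a family of commuting orthogonal projections, multiplicative and countably
additive in the strong topology, with `E(univ) = I`, compactly supported, commuting with `A`,
and whose diagonal scalar measures have moments reproducing those of `A`. -/
structure IsSpectralMeasure {H : Type*} [NormedAddCommGroup H] [InnerProductSpace ℂ H]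
    [CompleteSpace H] (A : H →L[ℂ] H) (E : Set ℝ → H →L[ℂ] H) : Prop where
  selfAdjoint : ∀ R : Set ℝ, IsSelfAdjoint (E R)
  idem : ∀ R : Set ℝ, E R ∘L E R = E R
  univ : E Set.univ = 1
  inter : ∀ R₁ R₂ : Set ℝ, E R₁ ∘L E R₂ = E (R₁ ∩ R₂)
  commutes : ∀ R : Set ℝ, A ∘L E R = E R ∘L A
  countablyAdditive : ∀ f : ℕ → Set ℝ, (∀ n, MeasurableSet (f n)) →
    Pairwise (Function.onFun Disjoint f) → ∀ v : H,
      HasSum (fun n => E (f n) v) (E (⋃ n, f n) v)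
  compactSupport : ∃ s : Set ℝ, IsCompact s ∧ E sᶜ = 0
  moment : ∀ v : H, ∀ μ : MeasureTheory.Measure ℝ,
      (∀ R : Set ℝ, MeasurableSet R → ((μ R).toReal : ℂ) = ⟪v, E R v⟫_ℂ) →
      ∀ n : ℕ, ⟪v, (A ^ n) v⟫_ℂ = ∫ t : ℝ, (t : ℂ) ^ n ∂μ

theorem IsSelfAdjoint.isUnit_sub_smul_one {𝓐 : Type*} [CStarAlgebra 𝓐] {a : 𝓐}
    (ha : IsSelfAdjoint a) {z : ℂ} (hz : z.im ≠ 0) : IsUnit (a - z • 1) := by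
  have hz : z ∉ spectrum ℂ a := fun hmem => hz (ha.im_eq_zero_of_mem_spectrum hmem)
  simpa [Algebra.algebraMap_eq_smul_one] using (spectrum.notMem_iff.mp hz).neg

namespace IsSpectralMeasure

variable {H : Type*} [NormedAddCommGroup H] [InnerProductSpace ℂ H] [CompleteSpace H]
  {A : H →L[ℂ] H} {E : Set ℝ → H →L[ℂ] H}

theorem apply_empty (hE : IsSpectralMeasure A E) : E ∅ = 0 := by
  ext v
  have hsum := hE.countablyAdditive (fun _ => ∅) (fun _ => MeasurableSet.empty)
    (fun _ _ _ => Set.disjoint_empty _) v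
  rw [Set.iUnion_empty] at hsum
  exact (summable_const_iff _).mp hsum.summable

theorem apply_apply (hE : IsSpectralMeasure A E) (R S : Set ℝ) (v : H) :
    E R (E S v) = E (R ∩ S) v := by
  rw [← hE.inter]
  rfl

theorem inner_apply_self (hE : IsSpectralMeasure A E) (R : Set ℝ) (v : H) :
    ⟪v, E R v⟫_ℂ = (‖E R v‖ : ℂ) ^ 2 := by
  calc ⟪v, E R v⟫_ℂ = ⟪v, E R (E R v)⟫_ℂ := by rw [hE.apply_apply, Set.inter_self]
    _ = ⟪E R v, E R v⟫_ℂ := ((hE.selfAdjoint R).isSymmetric v (E R v)).symm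
    _ = (‖E R v‖ : ℂ) ^ 2 := inner_self_eq_norm_sq_to_K _

theorem norm_apply_le (hE : IsSpectralMeasure A E) (R : Set ℝ) (v : H) : ‖E R v‖ ≤ ‖v‖ := by
  have hsq : ‖E R v‖ ^ 2 ≤ ‖v‖ * ‖E R v‖ := by
    calc ‖E R v‖ ^ 2 = ‖⟪v, E R v⟫_ℂ‖ := by
          rw [hE.inner_apply_self, norm_pow, Complex.norm_real, norm_norm]
      _ ≤ ‖v‖ * ‖E R v‖ := norm_inner_le_norm _ _
  nlinarith [norm_nonneg (E R v), norm_nonneg v]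

theorem apply_sub_smul_one_apply (hE : IsSpectralMeasure A E) (R : Set ℝ) (z : ℂ) (v : H) :
    E R ((A - z • 1) v) = (A - z • 1) (E R v) := by
  have hcomm := congrArg (fun T : H →L[ℂ] H => T v) (hE.commutes R)
  simp only [ContinuousLinearMap.comp_apply] at hcomm
  simp [hcomm]

-- The measure `R ↦ ⟪v, E R v⟫`, written as `‖E R v‖²` to make it visibly nonnegative.
noncomputable def scalarMeasure (hE : IsSpectralMeasure A E) (v : H) : Measure ℝ :=
  Measure.ofMeasurable (fun R _ => ENNReal.ofReal (‖E R v‖ ^ 2))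
    (by simp [hE.apply_empty])
    (by
      intro f hf hdisj
      have hsum : HasSum (fun n => ‖E (f n) v‖ ^ 2) (‖E (⋃ n, f n) v‖ ^ 2) := by
        have hinner := (innerSL ℂ v).hasSum (hE.countablyAdditive f hf hdisj v)
        simpa [hE.inner_apply_self, ← Complex.ofReal_pow] using Complex.reCLM.hasSum hinner
      rw [← hsum.tsum_eq, ENNReal.ofReal_tsum_of_nonneg (fun n => sq_nonneg _) hsum.summable])

theorem scalarMeasure_apply (hE : IsSpectralMeasure A E) (v : H) {R : Set ℝ}
    (hR : MeasurableSet R) : hE.scalarMeasure v R = ENNReal.ofReal (‖E R v‖ ^ 2) :=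
  Measure.ofMeasurable_apply R hR

theorem scalarMeasure_real_apply (hE : IsSpectralMeasure A E) (v : H) {R : Set ℝ}
    (hR : MeasurableSet R) : (hE.scalarMeasure v).real R = ‖E R v‖ ^ 2 := by
  rw [measureReal_def, hE.scalarMeasure_apply v hR, ENNReal.toReal_ofReal (sq_nonneg _)]

theorem scalarMeasure_real_univ (hE : IsSpectralMeasure A E) (v : H) :
    (hE.scalarMeasure v).real Set.univ = ‖v‖ ^ 2 := by
  rw [hE.scalarMeasure_real_apply v MeasurableSet.univ, hE.univ]
  rfl

instance (hE : IsSpectralMeasure A E) (v : H) : IsFiniteMeasure (hE.scalarMeasure v) :=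
  ⟨by rw [hE.scalarMeasure_apply v MeasurableSet.univ]; exact ENNReal.ofReal_lt_top⟩

theorem scalarMeasure_compl_eq_zero (hE : IsSpectralMeasure A E) {S : Set ℝ}
    (hS : MeasurableSet S) (u : H) : hE.scalarMeasure (E S u) Sᶜ = 0 := by
  rw [hE.scalarMeasure_apply _ hS.compl, hE.apply_apply, Set.compl_inter_self, hE.apply_empty]
  simp

theorem integrable_scalarMeasure (hE : IsSpectralMeasure A E) {f : ℝ → ℝ} (hf : Continuous f)
    (v : H) : Integrable f (hE.scalarMeasure v) := by
  obtain ⟨s, hs, hEs⟩ := hE.compactSupport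
  have hae : ∀ᵐ t ∂hE.scalarMeasure v, t ∈ s := by
    rw [ae_iff]
    exact (hE.scalarMeasure_apply v hs.isClosed.measurableSet.compl).trans (by simp [hEs])
  rw [← Measure.restrict_eq_self_of_ae_mem hae]
  exact hf.continuousOn.integrableOn_compact hs

theorem inner_pow_apply_eq_integral (hE : IsSpectralMeasure A E) (v : H) (n : ℕ) :
    ⟪v, (A ^ n) v⟫_ℂ = ((∫ t, t ^ n ∂hE.scalarMeasure v : ℝ) : ℂ) := by
  have hmoment := hE.moment v (hE.scalarMeasure v) (fun R hR => by
    rw [← measureReal_def, hE.scalarMeasure_real_apply v hR, hE.inner_apply_self]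
    push_cast; rfl) n
  rw [hmoment]
  simpa using integral_ofReal (𝕜 := ℂ) (μ := hE.scalarMeasure v) (f := fun t => t ^ n)

theorem norm_sub_smul_one_apply_sq (hA : IsSelfAdjoint A) (hE : IsSpectralMeasure A E)
    (z : ℂ) (v : H) :
    ‖(A - z • 1) v‖ ^ 2 = ∫ t, ((t - z.re) ^ 2 + z.im ^ 2) ∂hE.scalarMeasure v := by
  set ν := hE.scalarMeasure v
  have h1 : ⟪A v, v⟫_ℂ = ((∫ t, t ∂ν : ℝ) : ℂ) := by
    refine (hA.isSymmetric v v).trans ?_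
    simpa using hE.inner_pow_apply_eq_integral v 1
  have h2 : ⟪A v, A v⟫_ℂ = ((∫ t, t ^ 2 ∂ν : ℝ) : ℂ) := by
    refine (hA.isSymmetric v (A v)).trans ?_
    rw [← hE.inner_pow_apply_eq_integral v 2, pow_two]
    rfl
  have hexpand : ‖(A - z • 1) v‖ ^ 2
      = (∫ t, t ^ 2 ∂ν) - 2 * z.re * (∫ t, t ∂ν) + (z.re ^ 2 + z.im ^ 2) * ‖v‖ ^ 2 := by
    have hAv : ‖A v‖ ^ 2 = ∫ t, t ^ 2 ∂ν := by
      rw [← inner_self_eq_norm_sq (𝕜 := ℂ), h2, RCLike.re_to_complex, Complex.ofReal_re]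
    simp only [sub_apply, smul_apply, one_apply_eq_self]
    rw [norm_sub_sq (𝕜 := ℂ), inner_smul_right, h1, hAv, norm_smul, mul_pow,
      Complex.sq_norm, Complex.normSq_apply]
    simp only [RCLike.re_to_complex, Complex.mul_re, Complex.ofReal_re, Complex.ofReal_im]
    ring
  have hint (f : ℝ → ℝ) (hf : Continuous f) := hE.integrable_scalarMeasure hf v
  have hpoly : (fun t : ℝ => (t - z.re) ^ 2 + z.im ^ 2)
      = fun t => (t ^ 2 - 2 * z.re * t) + (z.re ^ 2 + z.im ^ 2) := by
    ext t; ring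
  rw [hexpand, hpoly, integral_add (hint _ (by fun_prop)) (integrable_const _),
    integral_sub (hint _ (by fun_prop)) (hint _ (by fun_prop)), integral_const_mul,
    integral_const, smul_eq_mul, hE.scalarMeasure_real_univ]
  ring

theorem norm_sub_smul_one_apply_sq_le (hA : IsSelfAdjoint A) (hE : IsSpectralMeasure A E)
    {z : ℂ} {v : H} {δ : ℝ} (hv : ∀ᵐ t ∂hE.scalarMeasure v, |t - z.re| ≤ δ) :
    ‖(A - z • 1) v‖ ^ 2 ≤ (δ ^ 2 + z.im ^ 2) * ‖v‖ ^ 2 := by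
  rw [hE.norm_sub_smul_one_apply_sq hA, ← hE.scalarMeasure_real_univ v, mul_comm,
    ← smul_eq_mul, ← integral_const]
  refine integral_mono_ae (hE.integrable_scalarMeasure (by fun_prop) v) (integrable_const _)
    (hv.mono fun t ht => ?_)
  exact add_le_add_left (sq_le_sq' (abs_le.mp ht).1 (abs_le.mp ht).2) _

theorem toReal_measure_le_mul_norm_inverse_apply_sq (hE : IsSpectralMeasure A E)
    (hA : IsSelfAdjoint A) {h : H} {μ : Measure ℝ}
    (hμ : ∀ R : Set ℝ, MeasurableSet R → ((μ R).toReal : ℂ) = ⟪h, E R h⟫_ℂ)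
    {z : ℂ} (hz : z.im ≠ 0) {S : Set ℝ} (hS : MeasurableSet S) {δ : ℝ}
    (hSδ : ∀ t ∈ S, |t - z.re| ≤ δ) :
    (μ S).toReal ≤ (δ ^ 2 + z.im ^ 2) * ‖Ring.inverse (A - z • 1) h‖ ^ 2 := by
  set u := Ring.inverse (A - z • 1) h
  have hu : (A - z • 1) u = h :=
    congrArg (fun B : H →L[ℂ] H => B h) (Ring.mul_inverse_cancel _ (hA.isUnit_sub_smul_one hz))
  have hESh : E S h = (A - z • 1) (E S u) := by rw [← hu, hE.apply_sub_smul_one_apply]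
  have hsupp : ∀ᵐ t ∂hE.scalarMeasure (E S u), |t - z.re| ≤ δ := by
    rw [ae_iff]
    refine measure_mono_null (fun t ht hmem => ht (hSδ t hmem)) ?_
    exact hE.scalarMeasure_compl_eq_zero hS u
  have hμS : (μ S).toReal = ‖E S h‖ ^ 2 := by
    exact_mod_cast (hμ S hS).trans (hE.inner_apply_self S h)
  calc (μ S).toReal = ‖(A - z • 1) (E S u)‖ ^ 2 := by rw [hμS, hESh]
    _ ≤ (δ ^ 2 + z.im ^ 2) * ‖E S u‖ ^ 2 := hE.norm_sub_smul_one_apply_sq_le hA hsupp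
    _ ≤ (δ ^ 2 + z.im ^ 2) * ‖u‖ ^ 2 := by gcongr; exact hE.norm_apply_le S u

end IsSpectralMeasure

theorem stmt6_general {H : Type*} [NormedAddCommGroup H] [InnerProductSpace ℂ H] [CompleteSpace H]
    (A : H →L[ℂ] H) (hA : IsSelfAdjoint A)
    (E : Set ℝ → H →L[ℂ] H) (hE : IsSpectralMeasure A E) (h : H)
    (μ : Measure ℝ)
    (hμ : ∀ R : Set ℝ, MeasurableSet R → ((μ R).toReal : ℂ) = ⟪h, E R h⟫_ℂ)
    (x : ℝ) (L : ℝ) (hL : 0 < L)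
    (hderiv : Tendsto
        (fun d : ℝ =>
          (μ (if 0 ≤ d then Set.Ioc x (x + d) else Set.Ioc (x + d) x)).toReal / |d|)
        (𝓝[≠] 0) (𝓝 L)) :
    Tendsto
      (fun ε : ℝ =>
        ‖Ring.inverse (A - (((x : ℂ) + (ε : ℂ) * Complex.I)) • (1 : H →L[ℂ] H)) h‖)
      (𝓝[>] 0) atTop := by
  set r : ℝ → ℝ := fun ε =>
    ‖Ring.inverse (A - (((x : ℂ) + (ε : ℂ) * Complex.I)) • (1 : H →L[ℂ] H)) h‖
  have hbound : ∀ ε > 0, (μ (Set.Ioc x (x + ε))).toReal ≤ 2 * ε ^ 2 * r ε ^ 2 := by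
    intro ε hε
    have := hE.toReal_measure_le_mul_norm_inverse_apply_sq hA hμ (z := x + ε * Complex.I)
      (by simpa using hε.ne') (measurableSet_Ioc (a := x) (b := x + ε)) (δ := ε)
      (fun t ht => abs_le.mpr ⟨by simp; linarith [ht.1], by simp; linarith [ht.2]⟩)
    convert this using 2
    simp only [Complex.add_im, Complex.ofReal_im, Complex.mul_im, Complex.ofReal_re,
      Complex.I_re, Complex.I_im]
    ring
  have hquot : Tendsto (fun ε => (μ (Set.Ioc x (x + ε))).toReal / ε) (𝓝[>] 0) (𝓝 L) := by
    refine (hderiv.mono_left (nhdsWithin_mono _ fun t ht => ne_of_gt ht)).congr' ?_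
    filter_upwards [self_mem_nhdsWithin] with ε (hε : 0 < ε)
    rw [if_pos hε.le, abs_of_pos hε]
  have hsq : Tendsto (fun ε => r ε ^ 2) (𝓝[>] 0) atTop := by
    refine tendsto_atTop_mono' _ ?_ (hquot.pos_mul_atTop hL
      (tendsto_inv_nhdsGT_zero.const_mul_atTop (by norm_num : (0 : ℝ) < 2⁻¹)))
    filter_upwards [self_mem_nhdsWithin] with ε (hε : 0 < ε)
    calc (μ (Set.Ioc x (x + ε))).toReal / ε * (2⁻¹ * ε⁻¹)
        = (μ (Set.Ioc x (x + ε))).toReal / (2 * ε ^ 2) := by field_simp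
      _ ≤ r ε ^ 2 := by rw [div_le_iff₀ (by positivity), mul_comm]; exact hbound ε hε
  exact (Real.tendsto_sqrt_atTop.comp hsq).congr fun ε => Real.sqrt_sq (norm_nonneg _)

/-- Let `A` be bounded self-adjoint, `h ∈ H`, and `μ(R) = ⟨E(R)h,h⟩` the
associated scalar spectral measure. If the symmetric derivative
`μ'(x) = lim_{d→0} μ((x, x+d])/d` exists and is strictly positive, then
`‖(A - x - iε)⁻¹ h‖ → ∞` as `ε → 0⁺`. -/
theorem stmt6 {H : Type*} [NormedAddCommGroup H] [InnerProductSpace ℂ H] [CompleteSpace H]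
    (A : H →L[ℂ] H) (hA : IsSelfAdjoint A)
    (E : Set ℝ → H →L[ℂ] H) (hE : IsSpectralMeasure A E) (h : H)
    (μ : Measure ℝ) [IsFiniteMeasure μ]
    (hμ : ∀ R : Set ℝ, MeasurableSet R → ((μ R).toReal : ℂ) = ⟪h, E R h⟫_ℂ)
    (x : ℝ) (L : ℝ) (hL : 0 < L)
    (hderiv : Tendsto
        (fun d : ℝ =>
          (μ (if 0 ≤ d then Set.Ioc x (x + d) else Set.Ioc (x + d) x)).toReal / |d|)
        (𝓝[≠] 0) (𝓝 L)) :
    Tendsto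
      (fun ε : ℝ =>
        ‖Ring.inverse (A - (((x : ℂ) + (ε : ℂ) * Complex.I)) • (1 : H →L[ℂ] H)) h‖)
      (𝓝[>] 0) atTop :=
  stmt6_general A hA E hE h μ hμ x L hL hderiv
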